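/- Let U be a real-connected slice-domain in ℍ with U ∩ ℝ ≠ ∅. Then for every q ∈ U and every x ∈ U ∩ ℝ there exists a continuous path γ : [0,1] → ℍ from q to x whose image is contained in U ∩ ℂ_I for some I ∈ 𝕊 (a slice preserving path). -/

import Mathlib

noncomputable section

abbrev Hq := Quaternion ℝ

/-- The sphere of imaginary units of the quaternions. -/
def SphereS : Set Hq := {q | q ^ 2 = -1}

/-- The identification of `ℂ` with the slice plane `ℂ_I = ℝ + ℝI`. -/
def sliceEmb (I : Hq) : ℂ → Hq := fun z => (z.re : Hq) + (z.im : Hq) * I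

/-- The slice complex plane `ℂ_I = ℝ + ℝI`. -/
def sliceC (I : Hq) : Set Hq := Set.range (sliceEmb I)

/-- The slice-topology on the quaternions: the quotient topology induced by the
canonical map from the disjoint union of the slices, i.e. the supremum of the
topologies coinduced by the parametrizations of the slices. -/
def sliceTopology : TopologicalSpace Hq :=
  ⨆ I ∈ SphereS, TopologicalSpace.coinduced (sliceEmb I) inferInstance

/-- The real line inside the quaternions. -/
def realLine : Set Hq := Set.range (fun x : ℝ => (x : Hq))

/-- `g : ℂ → ℍ` (thought of as a function on the slice `ℂ_I`) is (left) holomorphic on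
`U`: real differentiable with `∂ₓ g + I ∂_y g = 0`. -/
def SliceHolomorphicOn (I : Hq) (g : ℂ → Hq) (U : Set ℂ) : Prop :=
  ∀ z ∈ U, ∃ L : ℂ →L[ℝ] Hq, HasFDerivAt g L z ∧ L 1 + I * L Complex.I = 0

/-- A function on a slice-open set is slice regular if it is holomorphic on each slice. -/
def SliceRegular (f : Hq → Hq) (Ω : Set Hq) : Prop :=
  ∀ I ∈ SphereS, SliceHolomorphicOn I (f ∘ sliceEmb I) (sliceEmb I ⁻¹' Ω)

/-- `K(m)` for `K ∈ 𝕊^N` (with `K 0 = 1` by convention) and `1 ≤ m ≤ 2^N`: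
`∏_{i=N}^{1} (K_i K_{i-1})^{m_i}` where `(m_N … m_1)₂` is the binary expansion of `m-1`. -/
def zetaTerm (K : ℕ → Hq) (N m : ℕ) : Hq :=
  ((List.range N).reverse.map
    (fun j => (K (j + 1) * K j) ^ (if Nat.testBit (m - 1) j then 1 else 0))).prod

/-- The matrix `σ_N` (0-indexed): entry `(i,j)` is `(-1)^{N+(j+1)}` if
`(i+1)+(j+1) = 2^N + 1`, and `0` otherwise. -/
def sigmaMat (N : ℕ) : Matrix (Fin (2 ^ N)) (Fin (2 ^ N)) ℝ :=
  Matrix.of fun i j =>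
    if (i : ℕ) + (j : ℕ) = 2 ^ N - 1 then (-1 : ℝ) ^ (N + (j : ℕ) + 1) else 0

def QOrth (I J : Hq) : Prop := (I * star J).re = 0

/-!
Call a point of `U` slice-reachable if it lies in a slice `ℂ_I` and can be joined to `x` by a
path in `U ∩ ℂ_I`. The trace of the slice-reachable set on any slice `ℂ_K` is exactly the path
component of `x` in `U ∩ ℂ_K`: real points are joined to `x` along `ℝ` by real-connectedness, and
a non-real point lies only in the slices `ℂ_K` and `ℂ_{-K}`, which complex conjugation exchanges
while fixing `x`. Path components of open planar sets are clopen in them, so the slice-reachable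
set and its complement in `U` are both slice-open, and slice-connectedness of `U` finishes.
-/

open Complex ComplexConjugate Set Topology

theorem re_eq_zero_of_mem_sphereS {I : Hq} (hI : I ∈ SphereS) : I.re = 0 := by
  have h : I * I = -1 := by rw [← sq]; exact hI
  have h₀ := congrArg QuaternionAlgebra.re h
  have h₁ := congrArg QuaternionAlgebra.imI h
  have h₂ := congrArg QuaternionAlgebra.imJ h
  have h₃ := congrArg QuaternionAlgebra.imK h
  simp only [Quaternion.re_mul, Quaternion.imI_mul, Quaternion.imJ_mul, Quaternion.imK_mul,
    Quaternion.re_neg, Quaternion.imI_neg, Quaternion.imJ_neg, Quaternion.imK_neg,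
    Quaternion.re_one, Quaternion.imI_one, Quaternion.imJ_one, Quaternion.imK_one] at h₀ h₁ h₂ h₃
  have : I.re ^ 2 * (I.re ^ 2 + 1) = 0 := by
    linear_combination I.re ^ 2 * h₀ + (I.imI * I.re / 2) * h₁ + (I.imJ * I.re / 2) * h₂ +
      (I.imK * I.re / 2) * h₃
  simpa [add_pos_of_nonneg_of_pos (sq_nonneg I.re) one_pos |>.ne'] using this

theorem sphereS_nonempty : SphereS.Nonempty :=
  ⟨(⟨0, 1, 0, 0⟩ : Hq), by
    show (⟨0, 1, 0, 0⟩ : Hq) ^ 2 = -1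
    erw [sq]
    ext <;> simp⟩

theorem sliceEmb_ofReal (I : Hq) (r : ℝ) : sliceEmb I r = r := by
  simp [sliceEmb]

theorem sliceEmb_neg (I : Hq) : sliceEmb (-I) = sliceEmb I ∘ conj := by
  ext z <;> simp [sliceEmb]

theorem sliceEmb_eq_sliceEmb {I K : Hq} (hI : I ∈ SphereS) (hK : K ∈ SphereS) {w z : ℂ}
    (h : sliceEmb I w = sliceEmb K z) (hz : z.im ≠ 0) :
    (I = K ∧ w = z) ∨ (I = -K ∧ w = conj z) := by
  have hre : w.re = z.re := by
    simpa [sliceEmb, re_eq_zero_of_mem_sphereS hI, re_eq_zero_of_mem_sphereS hK] using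
      congrArg QuaternionAlgebra.re h
  have him : (w.im : Hq) * I = z.im * K := by
    simpa only [sliceEmb, hre, add_right_inj] using h
  have hsq : w.im ^ 2 = z.im ^ 2 := by
    have := congrArg (· ^ 2) him
    simp only [(Quaternion.coe_commute _ _).mul_pow] at this
    rw [show I ^ 2 = -1 from hI, show K ^ 2 = -1 from hK, mul_neg_one, mul_neg_one,
      neg_inj] at this
    rwa [← Quaternion.coe_pow, ← Quaternion.coe_pow, Quaternion.coe_inj] at this
  have hz' : (z.im : Hq) ≠ 0 := by rwa [Ne, ← Quaternion.coe_zero, Quaternion.coe_inj]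
  rcases sq_eq_sq_iff_eq_or_eq_neg.1 hsq with h' | h'
  · rw [h'] at him
    exact .inl ⟨mul_left_cancel₀ hz' him, Complex.ext hre h'⟩
  · rw [h', Quaternion.coe_neg, neg_mul, neg_eq_iff_eq_neg, ← mul_neg] at him
    exact .inr ⟨mul_left_cancel₀ hz' him, Complex.ext (by simpa using hre) (by simpa using h')⟩

theorem isOpen_sliceTopology_iff {s : Set Hq} :
    IsOpen[sliceTopology] s ↔ ∀ I ∈ SphereS, IsOpen (sliceEmb I ⁻¹' s) := by
  rw [show sliceTopology = ⨆ I ∈ SphereS, .coinduced (sliceEmb I) inferInstance from rfl]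
  simp only [isOpen_iSup_iff, isOpen_coinduced]

theorem continuous_sliceEmb {I : Hq} (hI : I ∈ SphereS) :
    Continuous[_, sliceTopology] (sliceEmb I) :=
  continuous_iff_coinduced_le.2 <|
    le_iSup₂ (f := fun J (_ : J ∈ SphereS) => TopologicalSpace.coinduced (sliceEmb J) _) I hI

theorem IsOpen.diff_pathComponentIn {X : Type*} [TopologicalSpace X]
    [LocallyPathConnectedSpace X] {F : Set X} (hF : IsOpen F) (x : X) :
    IsOpen (F \ pathComponentIn F x) := by
  refine isOpen_iff_forall_mem_open.2 fun y ⟨hyF, hyx⟩ => ⟨pathComponentIn F y, ?_,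
    hF.pathComponentIn y, mem_pathComponentIn_self hyF⟩
  exact fun z hz => ⟨pathComponentIn_subset hz, fun hzx => hyx (hzx.trans hz.symm)⟩

section SliceReachable

variable {U : Set Hq} {x : ℝ}

def sliceReachable (U : Set Hq) (x : ℝ) : Set Hq :=
  ⋃ I ∈ SphereS, sliceEmb I '' pathComponentIn (sliceEmb I ⁻¹' U) (x : ℂ)

theorem sliceReachable_subset : sliceReachable U x ⊆ U := by
  simp only [sliceReachable, iUnion_subset_iff, image_subset_iff]
  exact fun I _ => pathComponentIn_subset

theorem ofReal_mem_pathComponentIn_sliceEmb_preimage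
    (hreal : IsPreconnected ((fun x : ℝ => (x : Hq)) ⁻¹' U)) (hx : (x : Hq) ∈ U)
    (I : Hq) {y : ℝ} (hy : (y : Hq) ∈ U) :
    (y : ℂ) ∈ pathComponentIn (sliceEmb I ⁻¹' U) (x : ℂ) := by
  have hxy := (hreal.convex.isPathConnected ⟨x, hx⟩).joinedIn x hx y hy
  refine (hxy.map continuous_ofReal).mono ?_
  rintro _ ⟨r, hr, rfl⟩
  simpa [sliceEmb_ofReal] using hr

theorem conj_mem_pathComponentIn_of_sliceEmb_neg {I : Hq} {w : ℂ}
    (hw : w ∈ pathComponentIn (sliceEmb (-I) ⁻¹' U) (x : ℂ)) :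
    conj w ∈ pathComponentIn (sliceEmb I ⁻¹' U) (x : ℂ) := by
  rw [sliceEmb_neg, preimage_comp] at hw
  have := JoinedIn.map hw continuous_conj
  rwa [conj_ofReal, image_preimage_eq _ (Function.Involutive.surjective conj_conj)] at this

theorem preimage_sliceEmb_sliceReachable
    (hreal : IsPreconnected ((fun x : ℝ => (x : Hq)) ⁻¹' U)) (hx : (x : Hq) ∈ U)
    {K : Hq} (hK : K ∈ SphereS) :
    sliceEmb K ⁻¹' sliceReachable U x = pathComponentIn (sliceEmb K ⁻¹' U) (x : ℂ) := by
  refine Subset.antisymm (fun z hz => ?_) fun z hz => mem_biUnion hK (mem_image_of_mem _ hz)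
  obtain ⟨I, hI, w, hw, hwz⟩ := mem_iUnion₂.1 hz
  by_cases him : z.im = 0
  · have hzU : sliceEmb K z ∈ U := sliceReachable_subset hz
    rw [← re_add_im z, him, ofReal_zero, zero_mul, add_zero] at hzU ⊢
    exact ofReal_mem_pathComponentIn_sliceEmb_preimage hreal hx K (by
      rwa [sliceEmb_ofReal] at hzU)
  · rcases sliceEmb_eq_sliceEmb hI hK hwz him with ⟨rfl, rfl⟩ | ⟨rfl, rfl⟩
    · exact hw
    · simpa using conj_mem_pathComponentIn_of_sliceEmb_neg hw

end SliceReachable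

theorem exists_slicePath_of_joinedIn {U : Set Hq} {I : Hq} (hI : I ∈ SphereS) {z w : ℂ}
    (h : JoinedIn (sliceEmb I ⁻¹' U) z w) :
    ∃ γ : ℝ → Hq, @ContinuousOn ℝ Hq _ sliceTopology γ (Icc 0 1) ∧ γ 0 = sliceEmb I z ∧
      γ 1 = sliceEmb I w ∧ ∀ t ∈ Icc (0 : ℝ) 1, γ t ∈ U ∩ sliceC I := by
  refine ⟨fun t => sliceEmb I (h.somePath.extend t), ?_, by simp, by simp, fun t ht => ?_⟩
  · exact @Continuous.continuousOn _ _ _ sliceTopology _ _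
      (@Continuous.comp _ _ _ _ _ sliceTopology _ _ (continuous_sliceEmb hI)
        h.somePath.continuous_extend)
  · simp only [Path.extend_apply _ ht]
    exact ⟨h.somePath_mem _, mem_range_self _⟩

theorem exists_slicePreserving_path_to_real_general (U : Set Hq)
    (hopen : @IsOpen Hq sliceTopology U)
    (hconn : @IsPreconnected Hq sliceTopology U)
    (hreal : IsPreconnected ((fun x : ℝ => (x : Hq)) ⁻¹' U))
    (q : Hq) (hq : q ∈ U) (x : ℝ) (hx : (x : Hq) ∈ U) :
    ∃ I ∈ SphereS, ∃ γ : ℝ → Hq,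
      @ContinuousOn ℝ Hq _ sliceTopology γ (Set.Icc 0 1) ∧
      γ 0 = q ∧ γ 1 = (x : Hq) ∧
      ∀ t ∈ Set.Icc (0 : ℝ) 1, γ t ∈ U ∩ sliceC I := by
  have hpre := fun K (hK : K ∈ SphereS) => preimage_sliceEmb_sliceReachable hreal hx hK
  have hopenK := isOpen_sliceTopology_iff.1 hopen
  have hRopen : IsOpen[sliceTopology] (sliceReachable U x) := isOpen_sliceTopology_iff.2
    fun K hK => hpre K hK ▸ (hopenK K hK).pathComponentIn _
  have hUdiffR_open : IsOpen[sliceTopology] (U \ sliceReachable U x) :=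
    isOpen_sliceTopology_iff.2
    fun K hK => by rw [preimage_sdiff, hpre K hK]; exact (hopenK K hK).diff_pathComponentIn _
  obtain ⟨K, hK⟩ := sphereS_nonempty
  have hxR : (x : Hq) ∈ sliceReachable U x := by
    rw [← sliceEmb_ofReal K, ← mem_preimage, hpre K hK]
    exact mem_pathComponentIn_self (by rwa [mem_preimage, sliceEmb_ofReal])
  have hUR : U ⊆ sliceReachable U x :=
    @IsPreconnected.subset_left_of_subset_union _ sliceTopology _ _ _ hRopen hUdiffR_open
      disjoint_sdiff_right (by rw [union_sdiff_self]; exact subset_union_right) ⟨x, hx, hxR⟩ hconn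
  obtain ⟨I, hI, z, hz, rfl⟩ := mem_iUnion₂.1 (hUR hq)
  obtain ⟨γ, hγ⟩ := exists_slicePath_of_joinedIn hI hz.symm
  exact ⟨I, hI, γ, by rwa [sliceEmb_ofReal] at hγ⟩

/-- In a real-connected slice-domain meeting ℝ, every point can be joined to every real
point of the domain by a slice preserving path. -/
theorem exists_slicePreserving_path_to_real (U : Set Hq)
    (hopen : @IsOpen Hq sliceTopology U)
    (hconn : @IsPreconnected Hq sliceTopology U)
    (hne : U.Nonempty)
    (hreal : IsPreconnected ((fun x : ℝ => (x : Hq)) ⁻¹' U))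
    (hRne : (U ∩ realLine).Nonempty)
    (q : Hq) (hq : q ∈ U) (x : ℝ) (hx : (x : Hq) ∈ U) :
    ∃ I ∈ SphereS, ∃ γ : ℝ → Hq,
      @ContinuousOn ℝ Hq _ sliceTopology γ (Set.Icc 0 1) ∧
      γ 0 = q ∧ γ 1 = (x : Hq) ∧
      ∀ t ∈ Set.Icc (0 : ℝ) 1, γ t ∈ U ∩ sliceC I :=
  exists_slicePreserving_path_to_real_general U hopen hconn hreal q hq x hx
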